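/- Let C be a generalized Tambara-Yamagami fusion category with group of invertible objects G(C) and let N ≤ G(C) be the common stabilizer of the non-invertible simple objects under tensoring by invertibles. Then every non-invertible simple object has Frobenius-Perron dimension √|N|, the rank of C is [G(C):N]·(1+|N|), and FPdim(C) = 2|G(C)|. -/

import Mathlib

/-!
A Grothendieck-ring (fusion ring) level formalization of fusion categories.
`Fin n` indexes the isomorphism classes of simple objects, `N i j k` is the
multiplicity of the simple `k` in the tensor product `i ⊗ j`, `dim` records the
Frobenius–Perron dimensions of the simple objects.
-/

/-- The Grothendieck-ring data of a fusion category. -/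
structure FusionData where
  n : ℕ
  npos : 0 < n
  one : Fin n
  dual : Fin n → Fin n
  N : Fin n → Fin n → Fin n → ℕ
  dim : Fin n → ℝ
  dim_ge_one : ∀ i, 1 ≤ dim i
  dim_one : dim one = 1
  dim_dual : ∀ i, dim (dual i) = dim i
  dim_mul : ∀ i j, dim i * dim j = ∑ k, (N i j k : ℝ) * dim k
  N_one_left : ∀ i k, N one i k = if k = i then 1 else 0
  N_one_right : ∀ i k, N i one k = if k = i then 1 else 0
  N_dual : ∀ i j, N i j one = if j = dual i then 1 else 0
  dual_dual : ∀ i, dual (dual i) = i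
  N_assoc : ∀ i j k l, ∑ m, N i j m * N m k l = ∑ m, N j k m * N i m l

namespace FusionData

/-- The index type of (iso classes of) simple objects. -/
abbrev I (C : FusionData) : Type := Fin C.n

/-- A simple object is invertible iff its FP dimension is `1`. -/
def Invertible (C : FusionData) (i : C.I) : Prop := C.dim i = 1

/-- A fusion category is pointed if all its simple objects are invertible. -/
def Pointed (C : FusionData) : Prop := ∀ i : C.I, C.dim i = 1

/-- The Frobenius–Perron dimension of the category. -/
noncomputable def FPdim (C : FusionData) : ℝ := ∑ i : C.I, C.dim i ^ 2

open Classical in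
/-- The FP dimension of the full subcategory spanned by a set of simples. -/
noncomputable def FPdimSet (C : FusionData) (S : Set C.I) : ℝ :=
  ∑ i : C.I, if i ∈ S then C.dim i ^ 2 else 0

open Classical in
/-- The number of iso classes of invertible objects, i.e. the order of `G(C)`. -/
noncomputable def numInv (C : FusionData) : ℕ :=
  (Finset.univ.filter fun i : C.I => C.dim i = 1).card

/-- A fusion subcategory: a set of simples containing the unit and closed under
duals and under taking simple constituents of tensor products. -/
structure Sub (C : FusionData) where
  carrier : Set C.I
  one_mem : C.one ∈ carrier
  dual_mem : ∀ i ∈ carrier, C.dual i ∈ carrier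
  mul_mem : ∀ i ∈ carrier, ∀ j ∈ carrier, ∀ k, 0 < C.N i j k → k ∈ carrier

/-- The simples of the fusion subcategory generated by a set `S` of simples. -/
inductive gen (C : FusionData) (S : Set C.I) : C.I → Prop
  | base {i} : i ∈ S → gen C S i
  | one : gen C S C.one
  | dual {i} : gen C S i → gen C S (C.dual i)
  | mul {i j k} : gen C S i → gen C S j → 0 < C.N i j k → gen C S k

/-- Simple constituents of the objects `X ⊗ X⋆`, `X` simple. -/
def adjointGenerators (C : FusionData) : Set C.I := {k | ∃ i, 0 < C.N i (C.dual i) k}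

/-- The set of simple objects of the adjoint subcategory `C_ad`. -/
def adSet (C : FusionData) : Set C.I := {k | C.gen C.adjointGenerators k}

/-- The set of simples of `C_pt`, the largest pointed fusion subcategory. -/
def ptSet (C : FusionData) : Set C.I := {i | C.dim i = 1}

/-- The ring-level shadow of a braiding: the Grothendieck ring of a braided
fusion category is commutative. -/
def Braided (C : FusionData) : Prop := ∀ i j k, C.N i j k = C.N j i k

/-- Integrality: every simple object has integer FP dimension. -/
def Integral (C : FusionData) : Prop := ∀ i : C.I, ∃ m : ℕ, C.dim i = (m : ℝ)

/-- Generalized Tambara–Yamagami: non-pointed, and the tensor product of any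
two non-invertible simples is a direct sum of invertibles. -/
def GeneralizedTY (C : FusionData) : Prop :=
  ¬ C.Pointed ∧ ∀ i j : C.I, C.dim i ≠ 1 → C.dim j ≠ 1 →
    ∀ k, 0 < C.N i j k → C.dim k = 1

/-- A grading of `C` by a group `G`. -/
structure Grading (C : FusionData) (G : Type*) [Group G] where
  deg : C.I → G
  deg_one : deg C.one = 1
  deg_mul : ∀ i j k, 0 < C.N i j k → deg k = deg i * deg j
  deg_dual : ∀ i, deg (C.dual i) = (deg i)⁻¹

/-- A grading is faithful if every component is nonzero, equivalently the
degree map is surjective. -/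
def Grading.Faithful {C : FusionData} {G : Type*} [Group G] (g : C.Grading G) : Prop :=
  Function.Surjective g.deg

/-- A `ℤ_q`-extension of a pointed fusion category: a faithful `ℤ_q`-grading
whose trivial component is pointed. -/
structure ZqExtension (C : FusionData) (q : ℕ) where
  grading : C.Grading (Multiplicative (ZMod q))
  faithful : Function.Surjective grading.deg
  trivial_pointed : ∀ i, grading.deg i = 1 → C.dim i = 1

/-- `C` is tensor equivalent to the Deligne product `B ⊠ E`. -/
def IsDeligneProd (C B E : FusionData) : Prop :=
  ∃ e : C.I ≃ B.I × E.I,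
    e C.one = (B.one, E.one) ∧
    (∀ i, e (C.dual i) = (B.dual (e i).1, E.dual (e i).2)) ∧
    (∀ i j k, C.N i j k = B.N (e i).1 (e j).1 (e k).1 * E.N (e i).2 (e j).2 (e k).2) ∧
    (∀ i, C.dim i = B.dim (e i).1 * E.dim (e i).2)

/-- `C` is tensor equivalent to the Deligne product of the finite family `F`. -/
def IsDelignePi (C : FusionData) {t : ℕ} (F : Fin t → FusionData) : Prop :=
  ∃ e : C.I ≃ ∀ s, (F s).I,
    (e C.one = fun s => (F s).one) ∧
    (∀ i s, e (C.dual i) s = (F s).dual (e i s)) ∧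
    (∀ i j k, C.N i j k = ∏ s, (F s).N (e i s) (e j s) (e k s)) ∧
    (∀ i, C.dim i = ∏ s, (F s).dim (e i s))

/-- A fusion category of type `(1, m; α, n)`: `m` invertible simples, `n`
simples of FP dimension `α > 1`, and no others. -/
def OfType₂ (C : FusionData) (α : ℝ) (m n : ℕ) : Prop :=
  1 < α ∧ (∀ i : C.I, C.dim i = 1 ∨ C.dim i = α) ∧
    Nat.card {i : C.I // C.dim i = 1} = m ∧ Nat.card {i : C.I // C.dim i = α} = n

/-- An Ising category: three simples `1, g, X` with `g` invertible, `g ≠ 1`,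
`FPdim X = √2` and `X ⊗ X ≅ 1 ⊕ g`. -/
def IsIsing (C : FusionData) : Prop :=
  C.n = 3 ∧ ¬ C.Pointed ∧ C.FPdim = 4 ∧
    ∃ g X : C.I, g ≠ C.one ∧ C.dim g = 1 ∧ C.dim X = Real.sqrt 2 ∧ C.dual X = X ∧
      C.N X X C.one = 1 ∧ C.N X X g = 1 ∧ ∀ k, 0 < C.N X X k → k = C.one ∨ k = g

/-- Modularity at the Grothendieck-ring level: braided together with a
symmetric nondegenerate S-matrix satisfying the Verlinde relations and
normalized by FP dimensions on the row of the unit. -/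
def Modular (C : FusionData) : Prop :=
  C.Braided ∧
    ∃ s : Matrix C.I C.I ℂ,
      (∀ i j, s i j = s j i) ∧
      (∀ i, s C.one i = (C.dim i : ℂ)) ∧
      (∀ i j k, s i j * s i k = (C.dim i : ℂ) * ∑ l, (C.N j k l : ℂ) * s i l) ∧
      IsUnit s

/-- A ring-level Morita context between two fusion categories: a based
`(C, D)`-bimodule with commuting indecomposable actions and equal global
FP dimensions. -/
structure MoritaContext (C D : FusionData) where
  m : ℕ
  actL : C.I → Fin m → Fin m → ℕ
  actR : D.I → Fin m → Fin m → ℕ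
  actL_one : ∀ x y, actL C.one x y = if y = x then 1 else 0
  actR_one : ∀ x y, actR D.one x y = if y = x then 1 else 0
  actL_assoc : ∀ i j x z, (∑ k, C.N i j k * actL k x z) = ∑ y, actL j x y * actL i y z
  actR_assoc : ∀ i j x z, (∑ k, D.N i j k * actR k x z) = ∑ y, actR i x y * actR j y z
  commute : ∀ i j x z, (∑ y, actL i x y * actR j y z) = ∑ y, actR j x y * actL i y z
  indecL : ∀ x y, ∃ i, 0 < actL i x y
  indecR : ∀ x y, ∃ j, 0 < actR j x y
  fpdim_eq : C.FPdim = D.FPdim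

/-- (Categorical) Morita equivalence, encoded at the ring level. -/
def MoritaEquiv (C D : FusionData) : Prop := Nonempty (MoritaContext C D)

/-- Group-theoretical: Morita equivalent to a pointed fusion category. -/
def GroupTheoretical (C : FusionData) : Prop :=
  ∃ D : FusionData, D.Pointed ∧ MoritaEquiv C D

end FusionData

/-!
Tensoring with an invertible object permutes the simple objects, so `N_{gX}^X ∈ {0, 1}` for
invertible `g`. For a non-invertible `X`, all constituents of `X ⊗ X*` are invertible and, by
reciprocity, `N_{X X*}^k = N_{k* X}^X`, so `X ⊗ X* ≅ ⊕_{k ∈ N} k` and `FPdim(X)² = |N|`.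
Counting the pairs `(g, Y)` with `g` invertible and `Y ⊂ g* ⊗ X` in two ways (each `g* ⊗ X` is
simple; each non-invertible `Y` arises from `∑_{g} N_{X Y*}^g = FPdim(X) FPdim(Y) = |N|` of them)
gives `|G(C)| = |N| · #{non-invertible simples}`; the rank and `FPdim C` follow.
-/

namespace FusionData

open Finset

variable {C : FusionData}

lemma dim_pos (i : C.I) : 0 < C.dim i := one_pos.trans_le (C.dim_ge_one i)

lemma dual_injective : Function.Injective C.dual :=
  Function.LeftInverse.injective C.dual_dual

/-- Frobenius reciprocity, in the cyclic form `N_{hx}^y = N_{xy*}^{h*}`. -/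
lemma N_rotate (h x y : C.I) : C.N h x y = C.N x (C.dual y) (C.dual h) := by
  simpa [C.N_dual, dual_injective.eq_iff, eq_comm] using C.N_assoc h x (C.dual y) C.one

lemma N_mul_dim_le (i j k : C.I) : (C.N i j k : ℝ) * C.dim k ≤ C.dim i * C.dim j := by
  rw [C.dim_mul]
  exact single_le_sum (f := fun l => (C.N i j l : ℝ) * C.dim l)
    (fun l _ => mul_nonneg (Nat.cast_nonneg _) (dim_pos l).le) (mem_univ k)

lemma dim_le_mul_of_N_pos {i j k : C.I} (h : 0 < C.N i j k) :
    C.dim k ≤ C.dim i * C.dim j := by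
  have : (1 : ℝ) ≤ C.N i j k := by exact_mod_cast h
  nlinarith [N_mul_dim_le i j k, dim_pos k]

lemma dim_eq_of_N_pos {g X Y : C.I} (hg : C.dim g = 1) (h : 0 < C.N g X Y) :
    C.dim Y = C.dim X := by
  have hYX := dim_le_mul_of_N_pos h
  -- rotating twice: `N_{gX}^Y = N_{Y*g}^{X*}`
  rw [N_rotate, N_rotate, C.dual_dual] at h
  have hXY := dim_le_mul_of_N_pos h
  rw [C.dim_dual, C.dim_dual, hg] at hXY
  rw [hg] at hYX
  linarith

lemma sum_N_eq_one_of_invertible {g : C.I} (hg : C.dim g = 1) (X : C.I) : ∑ Y, C.N g X Y = 1 := by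
  have h : ∑ Y, (C.N g X Y : ℝ) * C.dim Y = ∑ Y, (C.N g X Y : ℝ) * C.dim X :=
    sum_congr rfl fun Y _ => by
      rcases (C.N g X Y).eq_zero_or_pos with h0 | hpos
      · simp [h0]
      · rw [dim_eq_of_N_pos hg hpos]
  rw [← C.dim_mul, hg, one_mul, ← sum_mul, eq_comm, mul_eq_right₀ (dim_pos X).ne'] at h
  exact_mod_cast h

lemma N_le_one_of_invertible {g : C.I} (hg : C.dim g = 1) (X Y : C.I) : C.N g X Y ≤ 1 :=
  (single_le_sum (fun _ _ => Nat.zero_le _) (mem_univ Y)).trans_eq (sum_N_eq_one_of_invertible hg X)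

lemma numInv_add_card_noninvertible :
    C.numInv + #{i : C.I | C.dim i ≠ 1} = C.n := by
  rw [numInv, card_filter_add_card_filter_not, card_univ, Fintype.card_fin]

lemma FPdim_eq_numInv_add :
    C.FPdim = C.numInv + ∑ i ∈ {i : C.I | C.dim i ≠ 1}, C.dim i ^ 2 := by
  rw [FPdim, numInv, ← sum_filter_add_sum_filter_not univ (fun i : C.I => C.dim i = 1),
    card_eq_sum_ones, Nat.cast_sum]
  congr 1
  exact sum_congr rfl fun i hi => by simp [(mem_filter.1 hi).2]

def IsCommonStabilizer (C : FusionData) (S : Set C.I) : Prop :=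
  ∀ X : C.I, C.dim X ≠ 1 → ∀ g : C.I, C.dim g = 1 → (0 < C.N g X X ↔ g ∈ S)

section GeneralizedTY

variable {Nsub : C.Sub}

open Classical in
lemma N_mul_dual_mul_dim (hTY : C.GeneralizedTY) (hNptd : ∀ i ∈ Nsub.carrier, C.dim i = 1)
    (hstab : C.IsCommonStabilizer Nsub.carrier) {X : C.I} (hX : C.dim X ≠ 1) (k : C.I) :
    (C.N X (C.dual X) k : ℝ) * C.dim k = if k ∈ Nsub.carrier then 1 else 0 := by
  have hrot : C.N X (C.dual X) k = C.N (C.dual k) X X := by rw [N_rotate (C.dual k), C.dual_dual]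
  split_ifs with hk
  · have hdk : C.dual k ∈ Nsub.carrier := Nsub.dual_mem k hk
    have hpos := (hstab X hX _ (hNptd _ hdk)).2 hdk
    have hone : C.N X (C.dual X) k = 1 :=
      le_antisymm (hrot ▸ N_le_one_of_invertible (hNptd _ hdk) X X) (hrot ▸ hpos)
    rw [hone, hNptd k hk, Nat.cast_one, one_mul]
  · suffices C.N X (C.dual X) k = 0 by rw [this, Nat.cast_zero, zero_mul]
    by_contra hne
    have hk1 : C.dim k = 1 :=
      hTY.2 X _ hX (by rwa [C.dim_dual]) k (Nat.pos_of_ne_zero hne)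
    have hdk := (hstab X hX _ (by rwa [C.dim_dual])).1 (hrot ▸ Nat.pos_of_ne_zero hne)
    exact hk (C.dual_dual k ▸ Nsub.dual_mem _ hdk)

lemma dim_sq_eq_card (hTY : C.GeneralizedTY) (hNptd : ∀ i ∈ Nsub.carrier, C.dim i = 1)
    (hstab : C.IsCommonStabilizer Nsub.carrier) {X : C.I} (hX : C.dim X ≠ 1) :
    C.dim X ^ 2 = Nat.card Nsub.carrier := by
  classical
  have hsq : C.dim X ^ 2 = C.dim X * C.dim (C.dual X) := by rw [C.dim_dual, sq]
  rw [hsq, C.dim_mul, sum_congr rfl fun k _ => N_mul_dual_mul_dim hTY hNptd hstab hX k, sum_boole,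
    Nat.card_eq_card_toFinset, Set.filter_mem_univ_eq_toFinset]

lemma dim_eq_sqrt_card (hTY : C.GeneralizedTY) (hNptd : ∀ i ∈ Nsub.carrier, C.dim i = 1)
    (hstab : C.IsCommonStabilizer Nsub.carrier) {X : C.I} (hX : C.dim X ≠ 1) :
    C.dim X = √(Nat.card Nsub.carrier) := by
  rw [← dim_sq_eq_card hTY hNptd hstab hX, Real.sqrt_sq (dim_pos X).le]

lemma sum_N_invertible_eq_card (hTY : C.GeneralizedTY)
    (hNptd : ∀ i ∈ Nsub.carrier, C.dim i = 1) (hstab : C.IsCommonStabilizer Nsub.carrier)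
    {X Y : C.I} (hX : C.dim X ≠ 1) (hY : C.dim Y ≠ 1) :
    ∑ g ∈ {g : C.I | C.dim g = 1}, C.N X (C.dual Y) g = Nat.card Nsub.carrier := by
  have hdY : C.dim (C.dual Y) ≠ 1 := by rwa [C.dim_dual]
  suffices (∑ g ∈ {g : C.I | C.dim g = 1}, C.N X (C.dual Y) g : ℝ) = Nat.card Nsub.carrier by
    exact_mod_cast this
  calc (∑ g ∈ {g : C.I | C.dim g = 1}, C.N X (C.dual Y) g : ℝ)
      = ∑ g, (C.N X (C.dual Y) g : ℝ) * C.dim g := by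
        rw [sum_filter]
        refine sum_congr rfl fun g _ => ?_
        split_ifs with hg
        · rw [hg, mul_one]
        · rw [Nat.eq_zero_of_not_pos fun h => hg (hTY.2 X _ hX hdY g h), Nat.cast_zero, zero_mul]
    _ = C.dim X * C.dim Y := by rw [← C.dim_mul, C.dim_dual]
    _ = Nat.card Nsub.carrier := by
        rw [dim_eq_sqrt_card hTY hNptd hstab hX, dim_eq_sqrt_card hTY hNptd hstab hY,
          Real.mul_self_sqrt (Nat.cast_nonneg _)]

lemma numInv_eq_card_mul (hTY : C.GeneralizedTY) (hNptd : ∀ i ∈ Nsub.carrier, C.dim i = 1)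
    (hstab : C.IsCommonStabilizer Nsub.carrier) :
    C.numInv = #{i : C.I | C.dim i ≠ 1} * Nat.card Nsub.carrier := by
  obtain ⟨X, hX⟩ : ∃ X : C.I, C.dim X ≠ 1 := by simpa [Pointed] using hTY.1
  calc C.numInv = ∑ g ∈ {g : C.I | C.dim g = 1}, ∑ Y, C.N (C.dual g) X Y := by
        rw [numInv, card_eq_sum_ones]
        refine sum_congr rfl fun g hg => (sum_N_eq_one_of_invertible ?_ X).symm
        rw [C.dim_dual, (mem_filter.1 hg).2]
    _ = ∑ Y, ∑ g ∈ {g : C.I | C.dim g = 1}, C.N X (C.dual Y) g := by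
        rw [sum_comm]
        exact sum_congr rfl fun Y _ => sum_congr rfl fun g _ => by rw [N_rotate, C.dual_dual]
    _ = ∑ Y ∈ {Y : C.I | C.dim Y ≠ 1}, Nat.card Nsub.carrier := by
        rw [sum_filter]
        refine sum_congr rfl fun Y _ => ?_
        split_ifs with hY
        · exact sum_N_invertible_eq_card hTY hNptd hstab hX hY
        · refine sum_eq_zero fun g hg => Nat.eq_zero_of_not_pos fun h => hY ?_
          rw [← C.dual_dual g, ← N_rotate] at h
          rw [dim_eq_of_N_pos (by rw [C.dim_dual, (mem_filter.1 hg).2]) h]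
          exact hX
    _ = #{i : C.I | C.dim i ≠ 1} * Nat.card Nsub.carrier := by rw [sum_const, smul_eq_mul]

end GeneralizedTY

end FusionData

open FusionData Finset in
/-- In a generalized Tambara–Yamagami category with common
stabilizer `N ≤ G(C)` of the non-invertible simples, every non-invertible
simple has FP dimension `√|N|`, the rank is `[G(C):N]·(1+|N|)` and
`FPdim C = 2·|G(C)|`. -/
theorem generalizedTY_structure
    (C : FusionData) (hTY : C.GeneralizedTY)
    (Nsub : C.Sub) (hNptd : ∀ i ∈ Nsub.carrier, C.dim i = 1)
    (hstab : ∀ X : C.I, C.dim X ≠ 1 →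
      ∀ g : C.I, C.dim g = 1 → (0 < C.N g X X ↔ g ∈ Nsub.carrier)) :
    (∀ X : C.I, C.dim X ≠ 1 → C.dim X = Real.sqrt (Nat.card Nsub.carrier)) ∧
    (∃ idx : ℕ, C.numInv = idx * Nat.card Nsub.carrier ∧
      C.n = idx * (1 + Nat.card Nsub.carrier)) ∧
    C.FPdim = 2 * C.numInv := by
  have hcount := numInv_eq_card_mul hTY hNptd hstab
  have hrank := C.numInv_add_card_noninvertible
  refine ⟨fun X hX => dim_eq_sqrt_card hTY hNptd hstab hX, ⟨_, hcount, ?_⟩, ?_⟩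
  · rw [hcount] at hrank
    linarith
  · rw [FPdim_eq_numInv_add,
      sum_congr rfl fun i hi => dim_sq_eq_card hTY hNptd hstab (mem_filter.1 hi).2,
      sum_const, nsmul_eq_mul, hcount]
    push_cast
    ring
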